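/- arXiv:2409.10573 — 3 statements merged into one kernel-verified Lean document; each statement's English description precedes it below -/
import Mathlib

section
/- Let F be a field and P ∈ F[X₁,…,Xₙ] a polynomial that is not identically zero on {0,1}ⁿ. If w = min{wt(u) : u ∈ {0,1}ⁿ, P(u) ≠ 0}, then deg(P) ≥ w. -/
/-! The alternating sum `∑_{T ⊆ S} (-1)^|T| P(1_T)` over the subcube below `1_S` equals
`(-1)^|S|` times the sum of the coefficients of the monomials of `P` whose support is exactly `S`
(Möbius inversion on the boolean lattice). When `1_S` is a point of minimal weight where `P`
does not vanish, only the term `T = S` survives, so `P` has a monomial involving all `|S| = w`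
variables of `S`, whose degree is at least `w`. -/

/-- The weight of a point of the hypercube: the number of coordinates equal to 1. -/
noncomputable def wt {F : Type*} [Field F] {n : ℕ} (u : Fin n → F) : ℕ :=
  Nat.card {i : Fin n // u i = 1}

open Finset MvPolynomial

lemma Finsupp.card_support_le_sum {σ : Type*} (m : σ →₀ ℕ) :
    #m.support ≤ m.sum fun _ e => e := by
  classical
  rw [← Finsupp.toFinset_toMultiset]
  exact (Multiset.toFinset_card_le _).trans_eq m.card_toMultiset

lemma Finset.sum_Icc_neg_one_pow_card {α R : Type*} [DecidableEq α] [CommRing R]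
    (A S : Finset α) :
    ∑ T ∈ Icc A S, (-1 : R) ^ #T = if A = S then (-1) ^ #S else 0 := by
  by_cases hAS : A ⊆ S
  · have hdisj : ∀ B ∈ (S \ A).powerset, Disjoint A B := fun B hB =>
      disjoint_of_subset_right (mem_powerset.1 hB) disjoint_sdiff
    rw [Icc_eq_image_powerset hAS, sum_image fun B hB B' hB' h => by
      rw [← union_sdiff_cancel_left (hdisj B hB), h, union_sdiff_cancel_left (hdisj B' hB')]]
    rw [sum_congr rfl fun B hB => by rw [card_union_of_disjoint (hdisj B hB), pow_add],
      ← mul_sum]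
    have h := congrArg (Int.cast : ℤ → R) (sum_powerset_neg_one_pow_card (x := S \ A))
    push_cast at h
    simp only [h, sdiff_eq_empty_iff_subset]
    by_cases hSA : S ⊆ A
    · simp [subset_antisymm hAS hSA]
    · simp [hSA, show A ≠ S from fun h => hSA h.ge]
  · rw [Icc_eq_empty hAS, sum_empty, if_neg fun h => hAS h.le]

lemma prod_indicator_one_pow {σ R : Type*} [DecidableEq σ] [CommSemiring R] (T : Finset σ)
    (m : σ →₀ ℕ) :
    ∏ i ∈ m.support, (T : Set σ).indicator (1 : σ → R) i ^ m i =
      if m.support ⊆ T then 1 else 0 := by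
  split_ifs with h
  · exact prod_eq_one fun i hi => by
      rw [Set.indicator_of_mem (mem_coe.2 (h hi)), Pi.one_apply, one_pow]
  · obtain ⟨i, hi, hiT⟩ := not_subset.1 h
    refine prod_eq_zero hi ?_
    rw [Set.indicator_of_notMem (mem_coe.not.2 hiT), zero_pow (Finsupp.mem_support_iff.1 hi)]

lemma sum_powerset_neg_one_pow_card_mul_eval_indicator {σ R : Type*} [DecidableEq σ] [CommRing R]
    (P : MvPolynomial σ R) (S : Finset σ) :
    ∑ T ∈ S.powerset, (-1) ^ #T * eval ((T : Set σ).indicator 1) P =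
      (-1) ^ #S * ∑ m ∈ P.support with m.support = S, coeff m P := by
  simp_rw [eval_eq, prod_indicator_one_pow, mul_sum]
  rw [sum_comm, sum_filter]
  refine sum_congr rfl fun m _ => ?_
  calc ∑ T ∈ S.powerset, (-1) ^ #T * (coeff m P * if m.support ⊆ T then 1 else 0)
      = coeff m P * ∑ T ∈ Icc m.support S, (-1 : R) ^ #T := by
        rw [Icc_eq_filter_powerset, sum_filter, mul_sum]
        refine sum_congr rfl fun T _ => ?_
        split_ifs <;> ring
    _ = _ := by rw [sum_Icc_neg_one_pow_card]; split_ifs <;> ring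

lemma exists_finset_eq_indicator_one {σ M : Type*} [Fintype σ] [Zero M] [One M] {u : σ → M}
    (hu : ∀ i, u i = 0 ∨ u i = 1) : ∃ S : Finset σ, u = (S : Set σ).indicator 1 := by
  classical
  refine ⟨univ.filter (u · = 1), funext fun i => ?_⟩
  rcases hu i with h | h <;> simp [Set.indicator_apply, h]

lemma wt_indicator_one {F : Type*} [Field F] {n : ℕ} (T : Finset (Fin n)) :
    wt ((T : Set (Fin n)).indicator (1 : Fin n → F)) = #T := by
  classical
  rw [wt, Nat.card_eq_fintype_card, Fintype.card_subtype]
  congr 1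
  ext i
  by_cases h : i ∈ T <;> simp [h]

theorem min_weight_bound {F : Type*} [Field F] {n w : ℕ}
    (P : MvPolynomial (Fin n) F)
    (hw : IsLeast {m : ℕ | ∃ u : Fin n → F, (∀ i, u i = 0 ∨ u i = 1) ∧
      MvPolynomial.eval u P ≠ 0 ∧ wt u = m} w) :
    w ≤ P.totalDegree := by
  classical
  obtain ⟨⟨u, hu, huP, rfl⟩, hmin⟩ := hw
  obtain ⟨S, rfl⟩ := exists_finset_eq_indicator_one hu
  have hproper : ∀ T ∈ S.powerset, T ≠ S → eval ((T : Set (Fin n)).indicator 1) P = 0 := by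
    intro T hT hTS
    by_contra hne
    have hle := hmin ⟨_, fun i => Set.indicator_eq_zero_or_self _ _ i, hne, rfl⟩
    rw [wt_indicator_one, wt_indicator_one] at hle
    exact hle.not_gt (card_lt_card (ssubset_of_subset_of_ne (mem_powerset.1 hT) hTS))
  have hsum := sum_powerset_neg_one_pow_card_mul_eval_indicator P S
  rw [sum_eq_single_of_mem S (mem_powerset_self S) fun T hT hTS => by
    rw [hproper T hT hTS, mul_zero]] at hsum
  rw [mul_left_cancel₀ (pow_ne_zero _ (neg_ne_zero.2 one_ne_zero)) hsum] at huP
  obtain ⟨m, hm, -⟩ := exists_ne_zero_of_sum_ne_zero huP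
  obtain ⟨hmP, rfl⟩ := mem_filter.1 hm
  rw [wt_indicator_one]
  exact m.card_support_le_sum.trans (le_totalDegree hmP)
end

section
/- Let F be a field and P ∈ F[X₁,…,Xₙ] a polynomial that is not identically zero on {0,1}ⁿ. If W = max{wt(u) : u ∈ {0,1}ⁿ, P(u) ≠ 0}, then deg(P) ≥ n − W. -/
open Finset Function MvPolynomial

theorem Finset.sum_powerset_neg_one_pow_mul_piecewise_eq_zero {ι α R : Type*} [DecidableEq ι]
    [CommRing R] {T : Finset ι} {i : ι} (hi : i ∈ T) (g : (ι → α) → R)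
    (hg : ∀ x y, g (update x i y) = g x) (a b : ι → α) :
    ∑ s ∈ T.powerset, (-1) ^ #s * g (s.piecewise a b) = 0 := by
  rw [← insert_erase hi, sum_powerset_insert (notMem_erase i T), ← sum_add_distrib]
  refine sum_eq_zero fun s hs => ?_
  have his : i ∉ s := fun h => notMem_erase i T (mem_powerset.mp hs h)
  rw [piecewise_insert, hg, card_insert_of_notMem his, pow_succ]
  ring

theorem Finsupp.exists_mem_eq_zero_of_degree_lt_card {σ : Type*} {d : σ →₀ ℕ} {T : Finset σ}
    (h : d.degree < #T) : ∃ i ∈ T, d i = 0 := by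
  by_contra! hpos
  have hT : T ⊆ d.support := fun i hi => Finsupp.mem_support_iff.mpr (hpos i hi)
  have hcard : #T ≤ d.degree :=
    calc #T = ∑ i ∈ T, 1 := card_eq_sum_ones T
      _ ≤ ∑ i ∈ T, d i := Finset.sum_le_sum fun i hi => Nat.one_le_iff_ne_zero.mpr (hpos i hi)
      _ ≤ ∑ i ∈ d.support, d i := Finset.sum_le_sum_of_subset hT
  omega

theorem MvPolynomial.eval_update_monomial_of_apply_eq_zero {σ R : Type*} [CommSemiring R]
    [DecidableEq σ] {d : σ →₀ ℕ} {i : σ} (hi : d i = 0) (c : R) (x : σ → R) (y : R) :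
    eval (update x i y) (monomial d c) = eval x (monomial d c) := by
  simp only [eval_monomial]
  congr 1
  refine Finsupp.prod_congr fun j hj => ?_
  rw [update_of_ne (ne_of_mem_of_not_mem hj (Finsupp.notMem_support_iff.mpr hi))]

theorem MvPolynomial.sum_powerset_neg_one_pow_mul_eval_piecewise_eq_zero {σ R : Type*}
    [DecidableEq σ] [CommRing R] {P : MvPolynomial σ R} {T : Finset σ} (hP : P.totalDegree < #T)
    (a b : σ → R) : ∑ s ∈ T.powerset, (-1) ^ #s * eval (s.piecewise a b) P = 0 := by
  conv_lhs => rw [P.as_sum]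
  simp_rw [map_sum, mul_sum]
  rw [sum_comm]
  refine sum_eq_zero fun d hd => ?_
  obtain ⟨i, hiT, hdi⟩ :=
    Finsupp.exists_mem_eq_zero_of_degree_lt_card ((le_totalDegree hd).trans_lt hP)
  exact sum_powerset_neg_one_pow_mul_piecewise_eq_zero hiT (fun x => eval x (monomial d _))
    (fun x y => eval_update_monomial_of_apply_eq_zero hdi _ x y) a b

section Hypercube

variable {F : Type*} [Field F] {n : ℕ}

theorem wt_eq_card_filter [DecidableEq F] (u : Fin n → F) : wt u = #{i | u i = 1} := by
  rw [wt, Nat.card_eq_fintype_card, Fintype.card_subtype]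

theorem wt_add_card_filter_eq_zero [DecidableEq F] {u : Fin n → F} (hu : ∀ i, u i = 0 ∨ u i = 1) :
    wt u + #{i | u i = 0} = n := by
  have hzero : ∀ i, u i = 0 ↔ ¬u i = 1 := fun i => by
    rcases hu i with h | h <;> simp [h]
  simp only [wt_eq_card_filter, hzero]
  rw [card_filter_add_card_filter_not, card_univ, Fintype.card_fin]

theorem wt_piecewise_one [DecidableEq F] {u : Fin n → F} {s : Finset (Fin n)} (hs : ∀ i ∈ s, u i ≠ 1) :
    wt (s.piecewise 1 u) = wt u + #s := by
  have hdisj : Disjoint ({i | u i = 1} : Finset (Fin n)) s :=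
    disjoint_left.mpr fun i hi his => hs i his (mem_filter.mp hi).2
  rw [wt_eq_card_filter, wt_eq_card_filter, ← card_union_of_disjoint hdisj]
  congr 1
  ext i
  by_cases his : i ∈ s <;> simp [his]

theorem piecewise_one_mem_cube {u : Fin n → F} (hu : ∀ i, u i = 0 ∨ u i = 1)
    (s : Finset (Fin n)) (i : Fin n) : s.piecewise 1 u i = 0 ∨ s.piecewise 1 u i = 1 := by
  by_cases his : i ∈ s
  · simp [his]
  · simpa [his] using hu i

end Hypercube

theorem max_weight_bound {F : Type*} [Field F] {n W : ℕ}
    (P : MvPolynomial (Fin n) F)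
    (hW : IsGreatest {m : ℕ | ∃ u : Fin n → F, (∀ i, u i = 0 ∨ u i = 1) ∧
      MvPolynomial.eval u P ≠ 0 ∧ wt u = m} W) :
    n - W ≤ P.totalDegree := by
  classical
  obtain ⟨u, hu, huP, rfl⟩ := hW.1
  set T : Finset (Fin n) := {i | u i = 0}
  have hT : wt u + #T = n := wt_add_card_filter_eq_zero hu
  have hvanish : ∀ s ∈ T.powerset, s ≠ ∅ → eval (s.piecewise 1 u) P = 0 := by
    intro s hs hne
    by_contra hP
    have hs1 : ∀ i ∈ s, u i ≠ 1 := fun i hi => by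
      simp [(mem_filter.mp (mem_powerset.mp hs hi)).2]
    have hmax := hW.2 ⟨_, piecewise_one_mem_cube hu s, hP, wt_piecewise_one hs1⟩
    exact hne (card_eq_zero.mp (by omega))
  have hsum : ∑ s ∈ T.powerset, (-1) ^ #s * eval (s.piecewise 1 u) P = eval u P := by
    rw [sum_eq_single_of_mem ∅ (empty_mem_powerset T)
      fun s hs hne => by rw [hvanish s hs hne, mul_zero]]
    simp
  by_contra! hdeg
  exact huP (hsum ▸ sum_powerset_neg_one_pow_mul_eval_piecewise_eq_zero (by omega) 1 u)
end

section
/- Let F be a field and r < n. Suppose R ∈ F[X₁,…,Xₙ] satisfies, for every u ∈ {0,1}ⁿ: R(u) = 0 if and only if wt(u) > r. If the statement of Hegedűs's theorem holds (any polynomial vanishing on all points of weight ≤ k but not on some point of weight > k has degree > k), then deg(R) ≥ n − r. -/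
open MvPolynomial

theorem MvPolynomial.totalDegree_bind₁_le {σ τ R : Type*} [CommSemiring R]
    {g : σ → MvPolynomial τ R} {m : ℕ} (hg : ∀ i, (g i).totalDegree ≤ m)
    (p : MvPolynomial σ R) :
    (bind₁ g p).totalDegree ≤ m * p.totalDegree := by
  classical
  rw [bind₁, aeval_def, eval₂_eq]
  refine (totalDegree_finsetSum _ _).trans (Finset.sup_le fun d hd => ?_)
  refine (totalDegree_mul _ _).trans ?_
  rw [algebraMap_eq, totalDegree_C, zero_add]
  refine (totalDegree_finsetProd _ _).trans ?_
  calc ∑ i ∈ d.support, ((g i) ^ d i).totalDegree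
      ≤ ∑ i ∈ d.support, m * d i :=
        Finset.sum_le_sum fun i _ =>
          (totalDegree_pow _ _).trans (by rw [mul_comm]; exact Nat.mul_le_mul_right _ (hg i))
    _ = m * d.sum fun _ e => e := by rw [Finsupp.sum, Finset.mul_sum]
    _ ≤ m * p.totalDegree := Nat.mul_le_mul_left _ (le_totalDegree hd)

theorem MvPolynomial.totalDegree_one_sub_X_le {σ R : Type*} [CommRing R] (i : σ) :
    (1 - X i : MvPolynomial σ R).totalDegree ≤ 1 :=
  (totalDegree_sub _ _).trans <| max_le (by simp) <|
    (totalDegree_monomial_le _ _).trans (by simp)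

theorem MvPolynomial.eval_bind₁_one_sub_X {σ R : Type*} [CommRing R] (u : σ → R)
    (p : MvPolynomial σ R) :
    eval u (bind₁ (fun i => 1 - X i) p) = eval (1 - u) p := by
  refine (eval₂Hom_bind₁ _ _ _ _).trans ?_
  simp [Pi.sub_def]

section Weight

variable {F : Type*} [Field F] {n : ℕ}

theorem wt_le (u : Fin n → F) : wt u ≤ n := by
  classical
  simpa [wt, Nat.card_eq_fintype_card] using Fintype.card_subtype_le (fun i => u i = 1)

theorem wt_one : wt (1 : Fin n → F) = n := by
  simp [wt]

theorem wt_zero : wt (0 : Fin n → F) = 0 := by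
  simp [wt]

theorem wt_one_sub {u : Fin n → F} (hu : ∀ i, u i = 0 ∨ u i = 1) :
    wt (1 - u) = n - wt u := by
  classical
  have hflip : ∀ i, (1 - u) i = 1 ↔ ¬u i = 1 := fun i => by
    rcases hu i with h | h <;> simp [h]
  rw [wt, wt, Nat.card_congr (Equiv.subtypeEquivRight hflip), Nat.card_eq_fintype_card,
    Fintype.card_subtype_compl, Nat.card_eq_fintype_card, Fintype.card_fin]

end Weight

theorem hegedus_implies_sziklai_weiner {F : Type*} [Field F] {n r : ℕ} (hr : r < n)
    (R : MvPolynomial (Fin n) F)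
    (hR : ∀ u : Fin n → F, (∀ i, u i = 0 ∨ u i = 1) →
      (MvPolynomial.eval u R = 0 ↔ r < wt u))
    (hegedus : ∀ (k : ℕ) (P : MvPolynomial (Fin n) F),
      (∀ u : Fin n → F, (∀ i, u i = 0 ∨ u i = 1) → wt u ≤ k →
        MvPolynomial.eval u P = 0) →
      (∃ v : Fin n → F, (∀ i, v i = 0 ∨ v i = 1) ∧ k < wt v ∧
        MvPolynomial.eval v P ≠ 0) →
      k < P.totalDegree) :
    n - r ≤ R.totalDegree := by
  set P := bind₁ (fun i => 1 - X i) R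
  have hP : ∀ u, eval u P = eval (1 - u) R := fun u => eval_bind₁_one_sub_X u R
  have hvanish : ∀ u : Fin n → F, (∀ i, u i = 0 ∨ u i = 1) → wt u ≤ n - r - 1 →
      eval u P = 0 := by
    intro u hu hwt
    have hu' : ∀ i, (1 - u) i = 0 ∨ (1 - u) i = 1 := fun i => by
      rcases hu i with h | h <;> simp [h]
    rw [hP, hR _ hu', wt_one_sub hu]
    have := wt_le u
    omega
  have hone : eval 1 P ≠ 0 := by
    rw [hP, sub_self, Ne, hR 0 fun _ => Or.inl rfl, wt_zero]
    exact Nat.not_lt_zero r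
  have hP_deg : n - r - 1 < P.totalDegree :=
    hegedus _ P hvanish ⟨1, fun _ => Or.inr rfl, by rw [wt_one]; omega, hone⟩
  have hR_deg : P.totalDegree ≤ R.totalDegree := by
    simpa using totalDegree_bind₁_le totalDegree_one_sub_X_le R
  omega
end
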